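/- Let Λ = {(V_i, Λ_i, v_i)}_{i∈I} and Γ = {(W_i, Γ_i, v_i)}_{i∈I} be g-fusion Bessel sequences in H with bounds B₁ and B₂ respectively. Then for every f ∈ H the family (v_i² P_{W_i} Γ_i* Λ_i P_{V_i} f)_{i∈I} is summable in H; consequently the bi-g-fusion frame operator S_{Λ,Γ} f = Σ_{i∈I} v_i² P_{W_i} Γ_i* Λ_i P_{V_i} f is a well-defined linear map from H to H. -/

import Mathlib

open scoped RealInnerProductSpace

/-- The orthogonal projection of `H` onto a subspace `V`, viewed as a map `H →L[ℝ] H`. -/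
noncomputable def proj {H : Type*} [NormedAddCommGroup H]
    [InnerProductSpace ℝ H] (V : Submodule ℝ H) [Submodule.HasOrthogonalProjection V] : H →L[ℝ] H :=
  V.subtypeL.comp (Submodule.orthogonalProjection V)

/-- `{(V i, Λ i, v i)}_{i ∈ I}` is a g-fusion Bessel sequence in `H` with bound `B`:
for every `f ∈ H`, `Σ_i (v i)² ‖Λ i (P_{V i} f)‖² ≤ B ‖f‖²` (the series being summable). -/
def GFusionBessel {H : Type*} [NormedAddCommGroup H] [InnerProductSpace ℝ H]
    {I : Type*} {K : I → Type*} [∀ i, NormedAddCommGroup (K i)]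
    [∀ i, InnerProductSpace ℝ (K i)]
    (V : I → Submodule ℝ H) [∀ i, CompleteSpace (V i)] (v : I → ℝ)
    (Λ : ∀ i, H →L[ℝ] K i) (B : ℝ) : Prop :=
  ∀ f : H, Summable (fun i => v i ^ 2 * ‖Λ i (proj (V i) f)‖ ^ 2) ∧
    ∑' i, v i ^ 2 * ‖Λ i (proj (V i) f)‖ ^ 2 ≤ B * ‖f‖ ^ 2

/-- The pair `({(V i, Λ i, v i)}, {(W i, Γ i, v i)})` is a bi-g-fusion frame for `H` with
bounds `0 < A ≤ B`: for every `f ∈ H` the family `(v i)² ⟪Λ i (P_{V i} f), Γ i (P_{W i} f)⟫`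
is summable with `A ‖f‖² ≤ Σ_i (v i)² ⟪Λ i (P_{V i} f), Γ i (P_{W i} f)⟫ ≤ B ‖f‖²`. -/
def BiGFusionFrame {H : Type*} [NormedAddCommGroup H] [InnerProductSpace ℝ H]
    {I : Type*} {K : I → Type*} [∀ i, NormedAddCommGroup (K i)]
    [∀ i, InnerProductSpace ℝ (K i)]
    (V W : I → Submodule ℝ H) [∀ i, CompleteSpace (V i)] [∀ i, CompleteSpace (W i)]
    (v : I → ℝ) (Λ Γ : ∀ i, H →L[ℝ] K i) (A B : ℝ) : Prop :=
  0 < A ∧ A ≤ B ∧ ∀ f : H,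
    Summable (fun i => v i ^ 2 * ⟪Λ i (proj (V i) f), Γ i (proj (W i) f)⟫) ∧
    A * ‖f‖ ^ 2 ≤ ∑' i, v i ^ 2 * ⟪Λ i (proj (V i) f), Γ i (proj (W i) f)⟫ ∧
    ∑' i, v i ^ 2 * ⟪Λ i (proj (V i) f), Γ i (proj (W i) f)⟫ ≤ B * ‖f‖ ^ 2

/-- If `Λ` and `Γ` are g-fusion Bessel sequences in `H` with bounds `B₁`, `B₂`, then for every
`f ∈ H` the family `(v i)² P_{W i} (Γ i)* (Λ i) (P_{V i} f)` is summable in `H`; consequently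
the bi-g-fusion frame operator `S_{Λ,Γ} f = Σ_i (v i)² P_{W i} (Γ i)* (Λ i) (P_{V i} f)` is a
well-defined linear map from `H` to `H`. -/
theorem stmt2 {H : Type*} [NormedAddCommGroup H] [InnerProductSpace ℝ H] [CompleteSpace H]
    {I : Type*} [Countable I] {K : I → Type*} [∀ i, NormedAddCommGroup (K i)]
    [∀ i, InnerProductSpace ℝ (K i)] [∀ i, CompleteSpace (K i)]
    (V W : I → Submodule ℝ H) [∀ i, CompleteSpace (V i)] [∀ i, CompleteSpace (W i)]
    (v : I → ℝ) (hv : ∀ i, 0 < v i) (Λ Γ : ∀ i, H →L[ℝ] K i) (B₁ B₂ : ℝ)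
    (hΛ : GFusionBessel V v Λ B₁) (hΓ : GFusionBessel W v Γ B₂) :
    (∀ f : H, Summable (fun i =>
        v i ^ 2 • proj (W i) (ContinuousLinearMap.adjoint (Γ i) (Λ i (proj (V i) f))))) ∧
      IsLinearMap ℝ (fun f : H => ∑' i,
        v i ^ 2 • proj (W i) (ContinuousLinearMap.adjoint (Γ i) (Λ i (proj (V i) f)))) := by
  classical
  have key : ∀ (f : H) (t : Finset I),
      ‖∑ i ∈ t, v i ^ 2 • proj (W i) (ContinuousLinearMap.adjoint (Γ i) (Λ i (proj (V i) f)))‖ ^ 2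
        ≤ (∑ i ∈ t, v i ^ 2 * ‖Λ i (proj (V i) f)‖ ^ 2) * max B₂ 0 := by
    intro f t
    set g : H := ∑ i ∈ t, v i ^ 2 • proj (W i) (ContinuousLinearMap.adjoint (Γ i) (Λ i (proj (V i) f))) with hg
    have h1 : ‖g‖ ^ 2 = ∑ i ∈ t, v i ^ 2 * ⟪Λ i (proj (V i) f), Γ i (proj (W i) g)⟫ := by
      rw [← real_inner_self_eq_norm_sq, hg, sum_inner]
      refine Finset.sum_congr rfl fun i _ => ?_
      rw [real_inner_smul_left]
      congr 1
      have : (proj (W i) (ContinuousLinearMap.adjoint (Γ i) (Λ i (proj (V i) f))) : H)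
          = ((W i).starProjection (ContinuousLinearMap.adjoint (Γ i) (Λ i (proj (V i) f))) : H) := rfl
      rw [this, Submodule.inner_starProjection_left_eq_right,
        ContinuousLinearMap.adjoint_inner_left]
      rfl
    have h2 : ‖g‖ ^ 2 ≤ ∑ i ∈ t, (v i * ‖Λ i (proj (V i) f)‖) * (v i * ‖Γ i (proj (W i) g)‖) := by
      rw [h1]
      refine Finset.sum_le_sum fun i _ => ?_
      have := real_inner_le_norm (Λ i (proj (V i) f)) (Γ i (proj (W i) g))
      have hv2 : (0:ℝ) ≤ v i ^ 2 := sq_nonneg _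
      nlinarith
    have h3 : (∑ i ∈ t, (v i * ‖Λ i (proj (V i) f)‖) * (v i * ‖Γ i (proj (W i) g)‖)) ^ 2
        ≤ (∑ i ∈ t, v i ^ 2 * ‖Λ i (proj (V i) f)‖ ^ 2) *
          ∑ i ∈ t, v i ^ 2 * ‖Γ i (proj (W i) g)‖ ^ 2 := by
      have := Finset.sum_mul_sq_le_sq_mul_sq t
        (fun i => v i * ‖Λ i (proj (V i) f)‖) (fun i => v i * ‖Γ i (proj (W i) g)‖)
      simpa [mul_pow] using this
    have h4 : ∑ i ∈ t, v i ^ 2 * ‖Γ i (proj (W i) g)‖ ^ 2 ≤ max B₂ 0 * ‖g‖ ^ 2 := by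
      have hle := Summable.sum_le_tsum t (fun i _ => by positivity) (hΓ g).1
      have := (hΓ g).2
      have : ∑ i ∈ t, v i ^ 2 * ‖Γ i (proj (W i) g)‖ ^ 2 ≤ B₂ * ‖g‖ ^ 2 := hle.trans this
      have hB : B₂ * ‖g‖ ^ 2 ≤ max B₂ 0 * ‖g‖ ^ 2 :=
        mul_le_mul_of_nonneg_right (le_max_left _ _) (sq_nonneg _)
      linarith
    have hA : (0:ℝ) ≤ ∑ i ∈ t, v i ^ 2 * ‖Λ i (proj (V i) f)‖ ^ 2 :=
      Finset.sum_nonneg fun i _ => by positivity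
    by_cases hg0 : ‖g‖ = 0
    · rw [hg0]
      have : (0:ℝ) ≤ max B₂ 0 := le_max_right _ _
      nlinarith
    · have hgpos : 0 < ‖g‖ ^ 2 := by positivity
      have h5 : (‖g‖ ^ 2) * (‖g‖ ^ 2) ≤
          ((∑ i ∈ t, v i ^ 2 * ‖Λ i (proj (V i) f)‖ ^ 2) * max B₂ 0) * ‖g‖ ^ 2 := by
        have hS : (0:ℝ) ≤ ∑ i ∈ t, (v i * ‖Λ i (proj (V i) f)‖) * (v i * ‖Γ i (proj (W i) g)‖) :=
          le_trans (sq_nonneg _) h2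
        have hBn : (0:ℝ) ≤ max B₂ 0 := le_max_right _ _
        nlinarith
      exact le_of_mul_le_mul_right (by linarith [h5]) hgpos
  have hsum : ∀ f : H, Summable (fun i =>
      v i ^ 2 • proj (W i) (ContinuousLinearMap.adjoint (Γ i) (Λ i (proj (V i) f)))) := by
    intro f
    rw [summable_iff_vanishing_norm]
    intro ε hε
    have hδ : (0:ℝ) < ε ^ 2 / (max B₂ 0 + 1) := by positivity
    obtain ⟨s, hs⟩ := summable_iff_vanishing_norm.mp (hΛ f).1 _ hδ
    refine ⟨s, fun t ht => ?_⟩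
    have h1 := key f t
    have h2 := hs t ht
    have hA : (0:ℝ) ≤ ∑ i ∈ t, v i ^ 2 * ‖Λ i (proj (V i) f)‖ ^ 2 :=
      Finset.sum_nonneg fun i _ => by positivity
    have h2' : ∑ i ∈ t, v i ^ 2 * ‖Λ i (proj (V i) f)‖ ^ 2 < ε ^ 2 / (max B₂ 0 + 1) := by
      calc ∑ i ∈ t, v i ^ 2 * ‖Λ i (proj (V i) f)‖ ^ 2
          ≤ ‖∑ i ∈ t, v i ^ 2 * ‖Λ i (proj (V i) f)‖ ^ 2‖ := le_abs_self _
        _ < _ := h2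
    have hBn : (0:ℝ) ≤ max B₂ 0 := le_max_right _ _
    have hlt : ‖∑ i ∈ t, v i ^ 2 • proj (W i)
        (ContinuousLinearMap.adjoint (Γ i) (Λ i (proj (V i) f)))‖ ^ 2 < ε ^ 2 := by
      have : (∑ i ∈ t, v i ^ 2 * ‖Λ i (proj (V i) f)‖ ^ 2) * max B₂ 0 < ε ^ 2 := by
        have hlt2 : (∑ i ∈ t, v i ^ 2 * ‖Λ i (proj (V i) f)‖ ^ 2) * (max B₂ 0 + 1)
            < ε ^ 2 / (max B₂ 0 + 1) * (max B₂ 0 + 1) :=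
          mul_lt_mul_of_pos_right h2' (by positivity)
        rw [div_mul_cancel₀] at hlt2
        · nlinarith
        · positivity
      linarith
    exact lt_of_pow_lt_pow_left₀ 2 hε.le hlt
  refine ⟨hsum, ?_, ?_⟩
  · intro x y
    have : ∀ i : I, v i ^ 2 • proj (W i) (ContinuousLinearMap.adjoint (Γ i) (Λ i (proj (V i) (x + y))))
        = v i ^ 2 • proj (W i) (ContinuousLinearMap.adjoint (Γ i) (Λ i (proj (V i) x)))
          + v i ^ 2 • proj (W i) (ContinuousLinearMap.adjoint (Γ i) (Λ i (proj (V i) y))) := by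
      intro i; rw [map_add, map_add, map_add, map_add, smul_add]
    simp_rw [this]
    exact Summable.tsum_add (hsum x) (hsum y)
  · intro c x
    have : ∀ i : I, v i ^ 2 • proj (W i) (ContinuousLinearMap.adjoint (Γ i) (Λ i (proj (V i) (c • x))))
        = c • (v i ^ 2 • proj (W i) (ContinuousLinearMap.adjoint (Γ i) (Λ i (proj (V i) x)))) := by
      intro i; rw [map_smul, map_smul, map_smul, map_smul, smul_comm]
    simp_rw [this]
    exact Summable.tsum_const_smul c (hsum x)
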